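/- Let X be a compact topological space, x₁,…,x_n ∈ X, and let V := C(X, ℝ) be the space of continuous real-valued functions on X with the supremum norm and its Borel σ-algebra. Let (U, ‖·‖_U) be a normed real vector space together with an injective linear map ι : U → V satisfying ‖ι u‖_∞ ≤ c ‖u‖_U for some constant c and all u ∈ U. Let σ : ℝ → ℝ be L-Lipschitz, and let μ_base be a probability measure on ℝ × V with ā := ∫ |a| dμ_base(a,h) < ∞ and such that, for each k, (a,h) ↦ a σ(h(x_k)) is μ_base-integrable. For κ ≥ 0, let F†_∞(U, μ_base, κ) be the set of functions f : X → ℝ for which there exist a probability measure μ on ℝ × V and a probability measure π on ℝ × V × V such that: the pushforward of π under (a,h,h') ↦ (a,h) is μ_base, the pushforward under (a,h,h') ↦ (a,h') is μ, the set { (a,h,h') : there is u ∈ U with ‖u‖_U ≤ κ and h' = h + ι u } has π-outer measure 1, and for every x ∈ X the map (a,h') ↦ a σ(h'(x)) is μ-integrable with f(x) = ∫ a σ(h'(x)) dμ(a,h'). Then the empirical Rademacher complexities satisfy R̂(F†_∞(U, μ_base, κ)) ≤ L ā R̂(B_κ), where B_κ := { x ↦ (ι u)(x) : u ∈ U, ‖u‖_U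 ≤ κ }. (Here the couplings fix the outer coefficient a and only transport the feature map h, corresponding to a zero learning rate for the last layer.) -/

import Mathlib

open MeasureTheory

noncomputable section

/-- The set of signed sums `∑_k τ_k f(x_k)`, `f ∈ 𝒜`, for a fixed sign pattern
`s` (with `true ↦ +1`, `false ↦ -1`). -/
def radSet {X : Type*} (n : ℕ) (x : Fin n → X) (𝒜 : Set (X → ℝ))
    (s : Fin n → Bool) : Set ℝ :=
  {r : ℝ | ∃ f ∈ 𝒜, r = ∑ k : Fin n, (if s k then (1 : ℝ) else -1) * f (x k)}

/-- The empirical Rademacher complexity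
`R̂(𝒜) = (1/n) E_τ [ sup_{f ∈ 𝒜} ∑_k τ_k f(x_k) ]`, the expectation over the
uniform sign vector written as an average over all `2^n` sign patterns. -/
def empRad {X : Type*} (n : ℕ) (x : Fin n → X) (𝒜 : Set (X → ℝ)) : ℝ :=
  (n : ℝ)⁻¹ * ((2 ^ n : ℝ))⁻¹ * ∑ s : Fin n → Bool, sSup (radSet n x 𝒜 s)

end

/-!
Fix a sign pattern `ε` and `f ∈ F†_∞` realised by a coupling `π`, so that `h' = h + ι u` with
`‖u‖ ≤ κ` for `π`-almost every `(a, h, h')`. Then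
`∑ ε_k f(x_k) = ∫ ∑ ε_k a σ(h(x_k)) dμ_base + ∫ ∑ ε_k a (σ(h(x_k) + ι u(x_k)) - σ(h(x_k))) dπ`.
The first term does not depend on `f` and vanishes on averaging over `ε`; the second is at most
the integral over `μ_base` of the supremum over the ball `‖u‖ ≤ κ`, which depends on `(a, h)` only.
For fixed `(a, h)` the maps `t ↦ a (σ(h(x_k) + t) - σ(h(x_k)))` are `|a| L`-Lipschitz, so the
Ledoux–Talagrand contraction bounds the sign average of that supremum by `|a| L` times the one
for `B_κ`; integrating `|a|` against `μ_base` gives the factor `ā`.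
-/

open Bornology Finset Function Set
open scoped NNReal

def boolSign (b : Bool) : ℝ := if b then 1 else -1

@[simp] lemma boolSign_true : boolSign true = 1 := rfl

@[simp] lemma boolSign_false : boolSign false = -1 := rfl

lemma abs_boolSign (b : Bool) : |boolSign b| = 1 := by cases b <;> simp

lemma boolSign_not (b : Bool) : boolSign (!b) = -boolSign b := by cases b <;> simp

section SignPatterns

variable {ι : Type*} [DecidableEq ι]

def flipAt (j : ι) : Equiv.Perm (ι → Bool) :=
  Involutive.toPerm (fun ε => update ε j (!ε j)) fun ε => by simp

lemma flipAt_apply (j : ι) (ε : ι → Bool) : flipAt j ε = update ε j (!ε j) := rfl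

lemma sum_boolSign_eq_zero [Fintype ι] (j : ι) : ∑ ε : ι → Bool, boolSign (ε j) = 0 := by
  have h := Equiv.sum_comp (flipAt j) fun ε => boolSign (ε j)
  simp only [flipAt_apply, update_self, boolSign_not, sum_neg_distrib] at h
  linarith

end SignPatterns

lemma sum_le_sum_of_add_comp_le {β : Type*} [Fintype β] (e : Equiv.Perm β) {f g : β → ℝ}
    (h : ∀ b, f b + f (e b) ≤ g b + g (e b)) : ∑ b, f b ≤ ∑ b, g b := by
  have hsum := Finset.sum_le_sum fun b (_ : b ∈ Finset.univ) => h b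
  rw [sum_add_distrib, sum_add_distrib, Equiv.sum_comp e f, Equiv.sum_comp e g] at hsum
  linarith

lemma iSup_add_iSup_le_of_lipschitzWith {α : Type*} [Nonempty α] {A g : α → ℝ} {φ : ℝ → ℝ}
    {K : ℝ≥0} (hφ : LipschitzWith K φ) (hup : BddAbove (range fun a => A a + K * g a))
    (hdown : BddAbove (range fun a => A a - K * g a)) :
    (⨆ a, A a + φ (g a)) + ⨆ a, A a - φ (g a) ≤
      (⨆ a, A a + K * g a) + ⨆ a, A a - K * g a := by
  refine ciSup_add_ciSup_le fun a b => ?_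
  have hab : φ (g a) - φ (g b) ≤ K * |g a - g b| :=
    (le_abs_self _).trans (by simpa [Real.dist_eq] using hφ.dist_le_mul (g a) (g b))
  rcases le_total (g b) (g a) with hle | hle
  · rw [abs_of_nonneg (sub_nonneg.2 hle)] at hab
    linarith [le_ciSup hup a, le_ciSup hdown b]
  · rw [abs_of_nonpos (sub_nonpos.2 hle)] at hab
    linarith [le_ciSup hup b, le_ciSup hdown a]

section Contraction

variable {ι α : Type*} [Fintype ι]

def signedSum (ε : ι → Bool) (φ : ι → ℝ → ℝ) (v : ι → ℝ) : ℝ :=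
  ∑ k, boolSign (ε k) * φ k (v k)

noncomputable def signedSup (V : α → ι → ℝ) (φ : ι → ℝ → ℝ) (ε : ι → Bool) : ℝ :=
  ⨆ a, signedSum ε φ (V a)

variable {V : α → ι → ℝ} {φ : ι → ℝ → ℝ}

lemma bddAbove_range_signedSum (hV : IsBounded (range V)) (hφ : ∀ k, Continuous (φ k))
    (ε : ι → Bool) : BddAbove (range fun a => signedSum ε φ (V a)) := by
  have hcont : Continuous (signedSum ε φ) := by unfold signedSum; fun_prop
  change BddAbove (range (signedSum ε φ ∘ V))
  rw [range_comp]
  exact (hV.isCompact_closure.bddAbove_image hcont.continuousOn).mono (image_mono subset_closure)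

lemma abs_signedSup_le [Nonempty α] {M : ℝ} (h : ∀ a k, |φ k (V a k)| ≤ M) (ε : ι → Bool) :
    |signedSup V φ ε| ≤ Fintype.card ι * M := by
  have hsum (a : α) : |signedSum ε φ (V a)| ≤ Fintype.card ι * M :=
    calc |signedSum ε φ (V a)| ≤ ∑ k, |boolSign (ε k) * φ k (V a k)| := abs_sum_le_sum_abs _ _
      _ ≤ ∑ _k : ι, M := sum_le_sum fun k _ => by rw [abs_mul, abs_boolSign, one_mul]; exact h a k
      _ = Fintype.card ι * M := by simp
  have hbdd : BddAbove (range fun a => signedSum ε φ (V a)) :=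
    ⟨_, forall_mem_range.2 fun a => (abs_le.1 (hsum a)).2⟩
  refine abs_le.2 ⟨?_, ciSup_le fun a => (abs_le.1 (hsum a)).2⟩
  exact le_ciSup_of_le hbdd (Classical.arbitrary α) (abs_le.1 (hsum _)).1

lemma signedSum_update [DecidableEq ι] (ε : ι → Bool) (φ : ι → ℝ → ℝ) (j : ι) (b : Bool)
    (g : ℝ → ℝ) (v : ι → ℝ) :
    signedSum (update ε j b) (update φ j g) v =
      (∑ k ∈ {j}ᶜ, boolSign (ε k) * φ k (v k)) + boolSign b * g (v j) := by
  rw [signedSum, Fintype.sum_eq_add_sum_compl j, add_comm]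
  congr 1
  · refine sum_congr rfl fun k hk => ?_
    rw [update_of_ne (by simpa using hk), update_of_ne (by simpa using hk)]
  · simp

lemma sum_signedSup_le_update [DecidableEq ι] [Nonempty α] (hV : IsBounded (range V))
    (hφ : ∀ k, Continuous (φ k)) {K : ℝ≥0} {j : ι} (hφj : LipschitzWith K (φ j)) :
    ∑ ε, signedSup V φ ε ≤ ∑ ε, signedSup V (update φ j fun t => K * t) ε := by
  refine sum_le_sum_of_add_comp_le (flipAt j) fun ε => ?_
  -- `ε` and its flip at `j` share the terms `k ≠ j`, collected in `A`.
  set A : α → ℝ := fun a => ∑ k ∈ {j}ᶜ, boolSign (ε k) * φ k (V a k)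
  have hsup (g : ℝ → ℝ) (b : Bool) :
      signedSup V (update φ j g) (update ε j b) = ⨆ a, A a + boolSign b * g (V a j) := by
    simp only [signedSup, signedSum_update, A]
  have hK (b : Bool) : BddAbove (range fun a => A a + boolSign b * (K * V a j)) := by
    have hcont (k : ι) : Continuous (update φ j (fun t => K * t) k) := by
      rcases eq_or_ne k j with rfl | hk
      · simp only [update_self]; fun_prop
      · simpa [update_of_ne hk] using hφ k
    simpa only [signedSum_update] using bddAbove_range_signedSum hV hcont (update ε j b)
  have h₁ := hsup (φ j) (ε j)
  have h₂ := hsup (φ j) (!ε j)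
  have h₃ := hsup (fun t => K * t) (ε j)
  rw [update_eq_self, update_eq_self] at h₁
  rw [update_eq_self] at h₂ h₃
  rw [flipAt_apply, h₁, h₂, h₃, hsup, boolSign_not]
  have hKup := hK true
  have hKdown := hK false
  simp only [boolSign_true, boolSign_false, one_mul, neg_one_mul, ← sub_eq_add_neg] at hKup hKdown
  cases ε j
  · simp only [boolSign_false, neg_neg, one_mul, neg_one_mul, ← sub_eq_add_neg]
    rw [add_comm, add_comm (⨆ a, A a - _)]
    exact iSup_add_iSup_le_of_lipschitzWith hφj hKup hKdown
  · simp only [boolSign_true, one_mul, neg_one_mul, ← sub_eq_add_neg]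
    exact iSup_add_iSup_le_of_lipschitzWith hφj hKup hKdown

/-- Ledoux–Talagrand contraction, in the form without absolute values. -/
theorem sum_signedSup_le_mul [DecidableEq ι] [Nonempty α] (hV : IsBounded (range V))
    {K : ℝ≥0} (hφ : ∀ k, LipschitzWith K (φ k)) :
    ∑ ε, signedSup V φ ε ≤ K * ∑ ε, signedSup V (fun _ t => t) ε := by
  have hreplace (S : Finset ι) : ∑ ε, signedSup V φ ε ≤
      ∑ ε, signedSup V (fun k => if k ∈ S then fun t : ℝ => K * t else φ k) ε := by
    induction S using Finset.induction_on with
    | empty => simp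
    | insert j S hj ih =>
      have hupd : update (fun k => if k ∈ S then fun t : ℝ => K * t else φ k) j (fun t => K * t) =
          fun k => if k ∈ insert j S then fun t : ℝ => K * t else φ k := by
        ext k : 1
        rcases eq_or_ne k j with rfl | hk <;> simp [*]
      refine ih.trans (hupd ▸ sum_signedSup_le_update hV (fun k => ?_) (by simpa [hj] using hφ j))
      split_ifs
      · fun_prop
      · exact (hφ k).continuous
  refine (hreplace univ).trans_eq ?_
  simp only [Finset.mem_univ, if_true, mul_sum, signedSup, signedSum,
    Real.mul_iSup_of_nonneg K.coe_nonneg]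
  simp only [mul_left_comm (K : ℝ)]

end Contraction

section TransportGain

variable {ι α : Type*} [Fintype ι] {V : α → ι → ℝ} {σ : ℝ → ℝ} {L : ℝ≥0}

/-- With `p = (a, (h(x_k))_k)`, the best signed gain of `a σ(h(x_k) + ·)` over `a σ(h(x_k))`
among the shifts `V`. -/
noncomputable def transportGain (V : α → ι → ℝ) (σ : ℝ → ℝ) (ε : ι → Bool)
    (p : ℝ × (ι → ℝ)) : ℝ :=
  signedSup V (fun k t => p.1 * (σ (p.2 k + t) - σ (p.2 k))) ε

lemma lipschitzWith_mul_sub_comp_add (hσ : LipschitzWith L σ) (a c : ℝ) :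
    LipschitzWith (‖a‖₊ * L) fun t => a * (σ (c + t) - σ c) :=
  LipschitzWith.of_dist_le_mul fun s t => by
    have h := hσ.dist_le_mul (c + s) (c + t)
    simp only [Real.dist_eq, add_sub_add_left_eq_sub] at h
    simp only [Real.dist_eq, ← mul_sub, sub_sub_sub_cancel_right, abs_mul, NNReal.coe_mul,
      coe_nnnorm, Real.norm_eq_abs, mul_assoc]
    gcongr

lemma measurable_transportGain [Nonempty α] (hV : IsBounded (range V)) (hσ : Continuous σ)
    (ε : ι → Bool) : Measurable (transportGain V σ ε) := by
  unfold transportGain signedSup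
  refine (lowerSemicontinuous_ciSup (fun p => bddAbove_range_signedSum hV (fun k => ?_) ε)
    fun a => Continuous.lowerSemicontinuous ?_).measurable
  · fun_prop
  · unfold signedSum; fun_prop

lemma abs_transportGain_le [Nonempty α] (hσ : LipschitzWith L σ) {R : ℝ}
    (hR : ∀ a k, |V a k| ≤ R) (ε : ι → Bool) (p : ℝ × (ι → ℝ)) :
    |transportGain V σ ε p| ≤ Fintype.card ι * (L * R) * |p.1| := by
  rw [mul_assoc]
  refine abs_signedSup_le (fun a k => ?_) ε
  have h := (lipschitzWith_mul_sub_comp_add hσ p.1 (p.2 k)).dist_le_mul (V a k) 0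
  simp only [Real.dist_eq, add_zero, sub_self, mul_zero, sub_zero, NNReal.coe_mul, coe_nnnorm,
    Real.norm_eq_abs] at h
  calc _ ≤ |p.1| * L * |V a k| := h
    _ ≤ |p.1| * L * R := by gcongr; exact hR a k
    _ = L * R * |p.1| := by ring

lemma sum_transportGain_le [DecidableEq ι] [Nonempty α] (hV : IsBounded (range V))
    (hσ : LipschitzWith L σ) (p : ℝ × (ι → ℝ)) :
    ∑ ε, transportGain V σ ε p ≤ |p.1| * L * ∑ ε, signedSup V (fun _ t => t) ε := by
  simpa [transportGain] using
    sum_signedSup_le_mul hV fun k => lipschitzWith_mul_sub_comp_add hσ p.1 (p.2 k)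

lemma signedSum_le_transportGain_add [Nonempty α] (hV : IsBounded (range V))
    (hσ : Continuous σ) (ε : ι → Bool) (p : ℝ × (ι → ℝ)) (a : α) :
    ∑ k, boolSign (ε k) * (p.1 * σ (p.2 k + V a k)) ≤
      transportGain V σ ε p + ∑ k, boolSign (ε k) * (p.1 * σ (p.2 k)) := by
  have h := le_ciSup (bddAbove_range_signedSum (φ := fun k t => p.1 * (σ (p.2 k + t) - σ (p.2 k)))
    hV (fun k => by fun_prop) ε) a
  rw [← sub_le_iff_le_add, ← sum_sub_distrib]
  refine (le_of_eq ?_).trans h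
  exact sum_congr rfl fun k _ => by ring

end TransportGain

section EmpiricalRademacher

variable {X : Type*} {n : ℕ} {x : Fin n → X}

lemma empRad_empty : empRad n x ∅ = 0 := by
  simp [empRad, radSet]

lemma empRad_nonneg_of_zero_mem {𝒜 : Set (X → ℝ)} (h : (0 : X → ℝ) ∈ 𝒜) : 0 ≤ empRad n x 𝒜 :=
  mul_nonneg (by positivity) (sum_nonneg fun _ _ => Real.sSup_nonneg' ⟨0, ⟨0, h, by simp⟩, le_rfl⟩)

lemma sSup_radSet_range {α : Type*} (g : α → X → ℝ) (s : Fin n → Bool) :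
    sSup (radSet n x (range g) s) = signedSup (fun a k => g a (x k)) (fun _ t => t) s := by
  have hrange : radSet n x (range g) s =
      range fun a => signedSum s (fun _ t => t) fun k => g a (x k) := by
    ext r
    constructor
    · rintro ⟨_, ⟨a, rfl⟩, rfl⟩
      exact ⟨a, rfl⟩
    · rintro ⟨a, rfl⟩
      exact ⟨g a, mem_range_self a, rfl⟩
  rw [hrange]
  rfl

lemma empRad_le_of_forall_signedSum_le {𝒜 : Set (X → ℝ)} (h𝒜 : 𝒜.Nonempty)
    (B : (Fin n → Bool) → ℝ) (c : Fin n → ℝ)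
    (h : ∀ s, ∀ f ∈ 𝒜, ∑ k, boolSign (s k) * f (x k) ≤ B s + ∑ k, boolSign (s k) * c k) :
    empRad n x 𝒜 ≤ (n : ℝ)⁻¹ * (2 ^ n : ℝ)⁻¹ * ∑ s, B s := by
  obtain ⟨f₀, hf₀⟩ := h𝒜
  have hsup (s : Fin n → Bool) : sSup (radSet n x 𝒜 s) ≤ B s + ∑ k, boolSign (s k) * c k :=
    csSup_le ⟨_, f₀, hf₀, rfl⟩ fun _ ⟨f, hf, hr⟩ => hr ▸ h s f hf
  have hcentred : ∑ s : Fin n → Bool, ∑ k, boolSign (s k) * c k = 0 := by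
    rw [sum_comm]
    exact sum_eq_zero fun k _ => by rw [← sum_mul, sum_boolSign_eq_zero, zero_mul]
  refine mul_le_mul_of_nonneg_left ?_ (by positivity)
  calc ∑ s, sSup (radSet n x 𝒜 s) ≤ ∑ s, (B s + ∑ k, boolSign (s k) * c k) :=
        sum_le_sum fun s _ => hsup s
    _ = ∑ s, B s := by rw [sum_add_distrib, hcentred, add_zero]

end EmpiricalRademacher

noncomputable section

/-- Continuous function spaces are equipped with the Borel σ-algebra of their
(compact-open) topology; for a compact domain this is the Borel σ-algebra of
the supremum norm. -/
instance instContinuousMapMeasurableSpace (X : Type*) [TopologicalSpace X] :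
    MeasurableSpace C(X, ℝ) := borel C(X, ℝ)

instance instBorelSpaceContinuousMap (X : Type*) [TopologicalSpace X] :
    BorelSpace C(X, ℝ) := ⟨rfl⟩

lemma ae_of_measure_eq_one_of_subset {Ω : Type*} [MeasurableSpace Ω] {π : Measure Ω}
    [IsProbabilityMeasure π] {s : Set Ω} {p : Ω → Prop} (hs : π s = 1)
    (hp : MeasurableSet {w | p w}) (hsp : ∀ w ∈ s, p w) : ∀ᵐ w ∂π, p w := by
  refine (ae_iff_measure_eq hp.nullMeasurableSet).2 (le_antisymm (measure_mono (subset_univ _)) ?_)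
  rw [measure_univ, ← hs]
  exact measure_mono hsp

section Coupling

variable {X ι α : Type*} [TopologicalSpace X] {σ : ℝ → ℝ} {L : ℝ≥0}

def sampleAt (x : ι → X) (w : ℝ × C(X, ℝ)) : ℝ × (ι → ℝ) := (w.1, fun k => w.2 (x k))

lemma measurable_sampleAt (x : ι → X) : Measurable (sampleAt x) :=
  measurable_fst.prodMk (measurable_pi_lambda _ fun k =>
    (continuous_eval_const (x k)).measurable.comp measurable_snd)

lemma isBounded_range_samples_closedBall [CompactSpace X] [Fintype ι] {U : Type*}
    [NormedAddCommGroup U] {P : U → C(X, ℝ)} {c : ℝ} (hP : ∀ u, ‖P u‖ ≤ c * ‖u‖) (x : ι → X)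
    (κ : ℝ) : IsBounded (range fun (u : Metric.closedBall (0 : U) κ) k => P u (x k)) := by
  refine isBounded_iff_forall_norm_le.2 ⟨|c| * κ, forall_mem_range.2 fun u => ?_⟩
  have hκ : 0 ≤ κ := Metric.nonempty_closedBall.1 ⟨(u : U), u.2⟩
  refine (pi_norm_le_iff_of_nonneg (by positivity)).2 fun k => ?_
  calc ‖P u (x k)‖ ≤ ‖P u‖ := (P u).norm_coe_le_norm (x k)
    _ ≤ |c| * ‖(u : U)‖ := (hP u).trans (by gcongr; exact le_abs_self c)
    _ ≤ |c| * κ := by gcongr; exact mem_closedBall_zero_iff.1 u.2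

lemma integrable_transportGain_sampleAt [Fintype ι] [Nonempty α] {V : α → ι → ℝ}
    (hV : IsBounded (range V)) (hσ : LipschitzWith L σ) (x : ι → X) {μ : Measure (ℝ × C(X, ℝ))}
    (ha : Integrable (fun w => |w.1|) μ) (ε : ι → Bool) :
    Integrable (fun w => transportGain V σ ε (sampleAt x w)) μ := by
  obtain ⟨R, hR⟩ := hV.exists_norm_le
  have hVR (a : α) (k : ι) : |V a k| ≤ R :=
    (norm_le_pi_norm (V a) k).trans (hR _ (mem_range_self a))
  have hmeas := (measurable_transportGain hV hσ.continuous ε).comp (measurable_sampleAt x)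
  exact (ha.const_mul (Fintype.card ι * (L * R))).mono' hmeas.aestronglyMeasurable
    (ae_of_all _ fun w => abs_transportGain_le hσ hVR ε (sampleAt x w))

lemma sum_integral_transportGain_le [Fintype ι] [DecidableEq ι] [Nonempty α] {V : α → ι → ℝ}
    (hV : IsBounded (range V)) (hσ : LipschitzWith L σ) (x : ι → X) {μ : Measure (ℝ × C(X, ℝ))}
    (ha : Integrable (fun w => |w.1|) μ) :
    ∑ ε, ∫ w, transportGain V σ ε (sampleAt x w) ∂μ ≤
      L * (∫ w, |w.1| ∂μ) * ∑ ε, signedSup V (fun _ t => t) ε := by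
  rw [← integral_finsetSum _ fun ε _ => integrable_transportGain_sampleAt hV hσ x ha ε]
  calc _ ≤ ∫ w, |w.1| * L * ∑ ε, signedSup V (fun _ t => t) ε ∂μ :=
        integral_mono
          (integrable_finsetSum _ fun ε _ => integrable_transportGain_sampleAt hV hσ x ha ε)
          ((ha.mul_const _).mul_const _) fun w => sum_transportGain_le hV hσ (sampleAt x w)
    _ = L * (∫ w, |w.1| ∂μ) * ∑ ε, signedSup V (fun _ t => t) ε := by
        simp only [mul_assoc, integral_mul_const]; ring

theorem sum_integral_le_integral_transportGain_add [Fintype ι] [Nonempty α] {x : ι → X}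
    {P : α → C(X, ℝ)} (hP : IsBounded (range fun a k => P a (x k))) (hσ : LipschitzWith L σ)
    {μbase μ : Measure (ℝ × C(X, ℝ))} {π : Measure (ℝ × C(X, ℝ) × C(X, ℝ))}
    [IsProbabilityMeasure π] (hπ₁ : π.map (fun w => (w.1, w.2.1)) = μbase)
    (hπ₂ : π.map (fun w => (w.1, w.2.2)) = μ) (hπP : π {w | ∃ a, w.2.2 = w.2.1 + P a} = 1)
    (ha : Integrable (fun w => |w.1|) μbase)
    (hbase : ∀ k, Integrable (fun w => w.1 * σ (w.2 (x k))) μbase)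
    (hμ : ∀ k, Integrable (fun w => w.1 * σ (w.2 (x k))) μ) (ε : ι → Bool) :
    ∑ k, boolSign (ε k) * ∫ w, w.1 * σ (w.2 (x k)) ∂μ ≤
      ∫ w, transportGain (fun a k => P a (x k)) σ ε (sampleAt x w) ∂μbase +
        ∑ k, boolSign (ε k) * ∫ w, w.1 * σ (w.2 (x k)) ∂μbase := by
  set S : ℝ × C(X, ℝ) → ℝ := fun w => ∑ k, boolSign (ε k) * (w.1 * σ (w.2 (x k)))
  set G : ℝ × C(X, ℝ) → ℝ := fun w => transportGain (fun a k => P a (x k)) σ ε (sampleAt x w) + S w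
  have hS_meas : Measurable S := by
    have := hσ.continuous.measurable
    have (k : ι) : Measurable fun h : C(X, ℝ) => h (x k) := (continuous_eval_const (x k)).measurable
    fun_prop
  have hS_int {ν : Measure (ℝ × C(X, ℝ))} (hν : ∀ k, Integrable (fun w => w.1 * σ (w.2 (x k))) ν) :
      Integrable S ν :=
    integrable_finsetSum _ fun k _ => (hν k).const_mul _
  have hsum {ν : Measure (ℝ × C(X, ℝ))} (hν : ∀ k, Integrable (fun w => w.1 * σ (w.2 (x k))) ν) :
      ∑ k, boolSign (ε k) * ∫ w, w.1 * σ (w.2 (x k)) ∂ν = ∫ w, S w ∂ν := by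
    rw [integral_finsetSum _ fun k _ => (hν k).const_mul _]
    simp only [integral_const_mul]
  have hG_meas : Measurable G :=
    ((measurable_transportGain hP hσ.continuous ε).comp (measurable_sampleAt x)).add hS_meas
  have hG_int : Integrable G μbase :=
    (integrable_transportGain_sampleAt hP hσ x ha ε).add (hS_int hbase)
  rw [hsum hμ, hsum hbase, ← integral_add (integrable_transportGain_sampleAt hP hσ x ha ε)
    (hS_int hbase)]
  have hp₁ : Measurable fun w : ℝ × C(X, ℝ) × C(X, ℝ) => (w.1, w.2.1) := by fun_prop
  have hp₂ : Measurable fun w : ℝ × C(X, ℝ) × C(X, ℝ) => (w.1, w.2.2) := by fun_prop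
  subst hπ₁ hπ₂
  rw [integral_map hp₂.aemeasurable hS_meas.aestronglyMeasurable,
    integral_map hp₁.aemeasurable hG_meas.aestronglyMeasurable]
  refine integral_mono_ae
    ((integrable_map_measure hS_meas.aestronglyMeasurable hp₂.aemeasurable).1 (hS_int hμ))
    ((integrable_map_measure hG_meas.aestronglyMeasurable hp₁.aemeasurable).1 hG_int) ?_
  refine ae_of_measure_eq_one_of_subset hπP (measurableSet_le (hS_meas.comp hp₂)
    (hG_meas.comp hp₁)) fun w ⟨a, hw⟩ => ?_
  simpa [hw, S, G, sampleAt] using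
    signedSum_le_transportGain_add hP hσ.continuous ε (sampleAt x (w.1, w.2.1)) a

end Coupling

theorem rademacher_transport_class_general
    (X : Type*) [TopologicalSpace X] [CompactSpace X] (n : ℕ) (x : Fin n → X)
    (U : Type*) [NormedAddCommGroup U] [NormedSpace ℝ U]
    (ι : U →ₗ[ℝ] C(X, ℝ))
    (hι_bdd : ∃ c : ℝ, ∀ u : U, ‖ι u‖ ≤ c * ‖u‖)
    (σ : ℝ → ℝ) (L : NNReal) (hσ_lip : LipschitzWith L σ)
    (μbase : Measure (ℝ × C(X, ℝ)))
    (hInt_a : Integrable (fun w : ℝ × C(X, ℝ) => |w.1|) μbase)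
    (hInt_k : ∀ k : Fin n,
      Integrable (fun w : ℝ × C(X, ℝ) => w.1 * σ (w.2 (x k))) μbase)
    (κ : ℝ) (hκ : 0 ≤ κ)
    -- the transport-based class `F†_∞(U, μ_base, κ)`
    (F : Set (X → ℝ))
    (hF : F = {f : X → ℝ | ∃ μ : Measure (ℝ × C(X, ℝ)),
      ∃ π : Measure (ℝ × C(X, ℝ) × C(X, ℝ)),
      IsProbabilityMeasure μ ∧ IsProbabilityMeasure π ∧
      π.map (fun w : ℝ × C(X, ℝ) × C(X, ℝ) => (w.1, w.2.1)) = μbase ∧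
      π.map (fun w : ℝ × C(X, ℝ) × C(X, ℝ) => (w.1, w.2.2)) = μ ∧
      π {w : ℝ × C(X, ℝ) × C(X, ℝ) |
          ∃ u : U, ‖u‖ ≤ κ ∧ w.2.2 = w.2.1 + ι u} = 1 ∧
      ∀ x' : X, Integrable (fun w : ℝ × C(X, ℝ) => w.1 * σ (w.2 x')) μ ∧
        f x' = ∫ w : ℝ × C(X, ℝ), w.1 * σ (w.2 x') ∂μ})
    -- the ball of radius `κ` of `U`, viewed as a class of functions on `X`
    (Bκ : Set (X → ℝ))
    (hBκ : Bκ = {g : X → ℝ | ∃ u : U, ‖u‖ ≤ κ ∧ g = fun x' => (ι u) x'}) :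
    empRad n x F ≤ (L : ℝ) * (∫ w : ℝ × C(X, ℝ), |w.1| ∂μbase) * empRad n x Bκ := by
  let P : Metric.closedBall (0 : U) κ → C(X, ℝ) := fun u => ι u
  have : Nonempty (Metric.closedBall (0 : U) κ) := ⟨⟨0, Metric.mem_closedBall_self hκ⟩⟩
  obtain ⟨c, hc⟩ := hι_bdd
  have hP := isBounded_range_samples_closedBall hc x κ
  have hBκ_range : Bκ = range fun u => ⇑(P u) := by
    ext g
    simp [hBκ, P, eq_comm]
  rcases F.eq_empty_or_nonempty with rfl | hF_ne
  · rw [empRad_empty]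
    refine mul_nonneg (mul_nonneg L.coe_nonneg (integral_nonneg fun _ => abs_nonneg _))
      (empRad_nonneg_of_zero_mem ?_)
    exact hBκ_range ▸ ⟨⟨0, Metric.mem_closedBall_self hκ⟩, by ext; simp [P]⟩
  refine (empRad_le_of_forall_signedSum_le hF_ne
    (fun s => ∫ w, transportGain (fun u k => P u (x k)) σ s (sampleAt x w) ∂μbase)
    (fun k => ∫ w, w.1 * σ (w.2 (x k)) ∂μbase) fun s f hf => ?_).trans ?_
  · rw [hF] at hf
    obtain ⟨μ, π, -, hπ, hπ₁, hπ₂, hπU, hf⟩ := hf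
    have hπP : π {w | ∃ u, w.2.2 = w.2.1 + P u} = 1 := by
      rw [← hπU]
      congr 1
      ext w
      simp [P]
    simp only [(hf _).2]
    exact sum_integral_le_integral_transportGain_add hP hσ_lip hπ₁ hπ₂ hπP hInt_a hInt_k
      (fun k => (hf _).1) s
  · calc _ ≤ (n : ℝ)⁻¹ * (2 ^ n : ℝ)⁻¹ * ((L : ℝ) * (∫ w, |w.1| ∂μbase) *
          ∑ s, signedSup (fun u k => P u (x k)) (fun _ t => t) s) :=
          mul_le_mul_of_nonneg_left (sum_integral_transportGain_le hP hσ_lip x hInt_a)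
            (by positivity)
      _ = _ := by simp only [empRad, hBκ_range, sSup_radSet_range]; ring

/-- Rademacher complexity of the transport-based function
class `F†_∞(U, μ_base, κ)`, untrained last layer. -/
theorem rademacher_transport_class
    (X : Type*) [TopologicalSpace X] [CompactSpace X] (n : ℕ) (x : Fin n → X)
    (U : Type*) [NormedAddCommGroup U] [NormedSpace ℝ U]
    (ι : U →ₗ[ℝ] C(X, ℝ)) (hι_inj : Function.Injective ι)
    (hι_bdd : ∃ c : ℝ, ∀ u : U, ‖ι u‖ ≤ c * ‖u‖)
    (σ : ℝ → ℝ) (L : NNReal) (hσ_lip : LipschitzWith L σ)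
    (μbase : Measure (ℝ × C(X, ℝ))) (hμbase : IsProbabilityMeasure μbase)
    (hInt_a : Integrable (fun w : ℝ × C(X, ℝ) => |w.1|) μbase)
    (hInt_k : ∀ k : Fin n,
      Integrable (fun w : ℝ × C(X, ℝ) => w.1 * σ (w.2 (x k))) μbase)
    (κ : ℝ) (hκ : 0 ≤ κ)
    -- the transport-based class `F†_∞(U, μ_base, κ)`
    (F : Set (X → ℝ))
    (hF : F = {f : X → ℝ | ∃ μ : Measure (ℝ × C(X, ℝ)),
      ∃ π : Measure (ℝ × C(X, ℝ) × C(X, ℝ)),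
      IsProbabilityMeasure μ ∧ IsProbabilityMeasure π ∧
      π.map (fun w : ℝ × C(X, ℝ) × C(X, ℝ) => (w.1, w.2.1)) = μbase ∧
      π.map (fun w : ℝ × C(X, ℝ) × C(X, ℝ) => (w.1, w.2.2)) = μ ∧
      π {w : ℝ × C(X, ℝ) × C(X, ℝ) |
          ∃ u : U, ‖u‖ ≤ κ ∧ w.2.2 = w.2.1 + ι u} = 1 ∧
      ∀ x' : X, Integrable (fun w : ℝ × C(X, ℝ) => w.1 * σ (w.2 x')) μ ∧
        f x' = ∫ w : ℝ × C(X, ℝ), w.1 * σ (w.2 x') ∂μ})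
    -- the ball of radius `κ` of `U`, viewed as a class of functions on `X`
    (Bκ : Set (X → ℝ))
    (hBκ : Bκ = {g : X → ℝ | ∃ u : U, ‖u‖ ≤ κ ∧ g = fun x' => (ι u) x'})
    -- the suprema in the Rademacher complexities are assumed finite
    (hFbdd : ∀ s : Fin n → Bool, BddAbove (radSet n x F s))
    (hBbdd : ∀ s : Fin n → Bool, BddAbove (radSet n x Bκ s)) :
    empRad n x F ≤ (L : ℝ) * (∫ w : ℝ × C(X, ℝ), |w.1| ∂μbase) * empRad n x Bκ :=
  rademacher_transport_class_general X n x U ι hι_bdd σ L hσ_lip μbase hInt_a hInt_k κ hκ F hF Bκ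
    hBκ

end
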